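/- Let (M,d) be a homogeneous metric space, let G be a subgroup of Iso(M,d) that acts transitively on M, endowed with the topology of pointwise convergence, and fix o ∈ M and ε > 0. Then there exists an admissible left-invariant distance function d_G on G such that the orbit map π : g ↦ g(o) from (G,d_G) to (M,d) is 1-Lipschitz and a (1,ε)-quasi-isometry. In particular, Iso(M,d) is metrisable. -/

import Mathlib

/-- `f` is an `(L, C)`-quasi-isometry between the distances `dX` and `dY`. -/
def IsQuasiIsometry {X Y : Type*} (L C : ℝ) (dX : X → X → ℝ) (dY : Y → Y → ℝ)
    (f : X → Y) : Prop :=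
  (∀ x y : X, L⁻¹ * dX x y - C ≤ dY (f x) (f y) ∧ dY (f x) (f y) ≤ L * dX x y + C) ∧
  ∀ z : Y, ∃ x : X, dY (f x) z ≤ C

/-- `d` is a distance function on `X` inducing the given topology (admissibility). -/
def IsCompatibleDist (X : Type*) [TopologicalSpace X] (d : X → X → ℝ) : Prop :=
  (∀ x y : X, d x y = 0 ↔ x = y) ∧ (∀ x y : X, d x y = d y x) ∧
  (∀ x y z : X, d x z ≤ d x y + d y z) ∧
  ∀ (x : X) (s : Set X), s ∈ nhds x ↔ ∃ ε > 0, {y : X | d x y < ε} ⊆ s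

/-- Left-invariance of a distance function on a group. -/
def IsLeftInvariant {G : Type*} [Group G] (d : G → G → ℝ) : Prop :=
  ∀ g x y : G, d (g * x) (g * y) = d x y

/-!
Homogeneity makes the radius of compact closed balls uniform, say `r`, and connectedness then
exhausts `M` by the iterated `r/2`-thickenings of a point, which stay compact; so `M` is
separable. Isometries are equicontinuous, so on them pointwise convergence is convergence along a
dense sequence `x`, and `f ↦ f ∘ x` embeds `Iso(M)` into `ℕ → M`. The countable product metric
`∑ min (2⁻ⁿ, dist)` there is bounded by `2`; scaling it by `ε / 2` and adding `dist (f o) (g o)`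
gives a left-invariant admissible distance exceeding the orbit distance by at most `ε`.
-/

open Metric Set Filter Topology TopologicalSpace

theorem isCompatibleDist_dist {Y : Type*} [MetricSpace Y] : IsCompatibleDist Y dist :=
  ⟨fun _ _ => dist_eq_zero, dist_comm, dist_triangle, fun a s => by
    simp only [Metric.mem_nhds_iff, ball, dist_comm _ a]⟩

namespace IsCompatibleDist

variable {X Y : Type*} [TopologicalSpace X] {d : X → X → ℝ}

theorem nonneg (hd : IsCompatibleDist X d) (a b : X) : 0 ≤ d a b := by
  have h := hd.2.2.1 a b a
  rw [(hd.1 a a).2 rfl, hd.2.1 b a] at h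
  linarith

theorem comap [TopologicalSpace Y] {d : Y → Y → ℝ} (hd : IsCompatibleDist Y d) {e : X → Y}
    (he : IsEmbedding e) : IsCompatibleDist X fun a b => d (e a) (e b) := by
  refine ⟨fun a b => (hd.1 _ _).trans he.injective.eq_iff, fun a b => hd.2.1 _ _,
    fun a b c => hd.2.2.1 _ _ _, fun a s => ?_⟩
  rw [he.isInducing.nhds_eq_comap, mem_comap]
  constructor
  · rintro ⟨t, ht, hts⟩
    obtain ⟨r, hr, hrt⟩ := (hd.2.2.2 _ t).1 ht
    exact ⟨r, hr, fun b hb => hts (hrt hb)⟩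
  · rintro ⟨r, hr, hrs⟩
    exact ⟨_, (hd.2.2.2 _ _).2 ⟨r, hr, subset_rfl⟩, hrs⟩

theorem const_mul (hd : IsCompatibleDist X d) {c : ℝ} (hc : 0 < c) :
    IsCompatibleDist X fun a b => c * d a b := by
  refine ⟨fun a b => by simp [hc.ne', hd.1], fun a b => by simp only [hd.2.1 a b], fun a b e => ?_,
    fun a s => ?_⟩
  · rw [← mul_add]
    exact mul_le_mul_of_nonneg_left (hd.2.2.1 a b e) hc.le
  · rw [hd.2.2.2 a s]
    constructor
    · rintro ⟨r, hr, hrs⟩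
      exact ⟨c * r, mul_pos hc hr, fun b hb => hrs (lt_of_mul_lt_mul_left hb hc.le)⟩
    · rintro ⟨r, hr, hrs⟩
      exact ⟨r / c, div_pos hr hc, fun b hb => hrs (show c * d a b < r from (lt_div_iff₀' hc).1 hb)⟩

theorem add_dist_comp [PseudoMetricSpace Y] (hd : IsCompatibleDist X d) {e : X → Y}
    (he : Continuous e) : IsCompatibleDist X fun a b => d a b + dist (e a) (e b) := by
  refine ⟨fun a b => ⟨fun h => (hd.1 a b).1 ?_, ?_⟩,
    fun a b => by simp only [hd.2.1 a b, dist_comm], fun a b c => ?_, fun a s => ⟨fun hs => ?_, fun ⟨r, hr, hrs⟩ => ?_⟩⟩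
  · linarith [hd.nonneg a b, dist_nonneg (x := e a) (y := e b)]
  · rintro rfl
    simp [(hd.1 a a).2 rfl]
  · linarith [hd.2.2.1 a b c, dist_triangle (e a) (e b) (e c)]
  · obtain ⟨r, hr, hrs⟩ := (hd.2.2.2 a s).1 hs
    exact ⟨r, hr, fun b hb => hrs (lt_of_le_of_lt (le_add_of_nonneg_right dist_nonneg) hb)⟩
  · have hd_near : {b | d a b < r / 2} ∈ 𝓝 a := (hd.2.2.2 a _).2 ⟨r / 2, half_pos hr, subset_rfl⟩
    have he_near : ∀ᶠ b in 𝓝 a, dist (e a) (e b) < r / 2 := by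
      simpa only [dist_comm] using (he.tendsto a).eventually (ball_mem_nhds (e a) (half_pos hr))
    filter_upwards [hd_near, he_near] with b hb₁ hb₂
    exact hrs (by simp only [mem_ofPred_eq] at hb₁ ⊢; linarith)

theorem metrizableSpace (hd : IsCompatibleDist X d) : MetrizableSpace X := by
  obtain ⟨hzero, hcomm, htri, hnhds⟩ := hd
  let := MetricSpace.ofDistTopology d (fun a => (hzero a a).2 rfl) hcomm htri
    (fun s => by simp only [isOpen_iff_mem_nhds, hnhds]; rfl) (fun a b h => (hzero a b).1 h)
  infer_instance

end IsCompatibleDist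

open scoped PiCountable in
theorem PiCountable.dist_le_two {F : ℕ → Type*} [∀ n, PseudoMetricSpace (F n)]
    (u v : ∀ n, F n) : dist u v ≤ 2 :=
  calc dist u v ≤ ∑' n : ℕ, (2⁻¹ : ℝ) ^ n :=
        (PiCountable.dist_summable u v).tsum_le_tsum (fun n => min_le_left _ _)
          (summable_geometric_of_lt_one (by norm_num) (by norm_num))
    _ = 2 := tsum_geometric_inv_two

section Separability

variable {M : Type*} [MetricSpace M]

theorem exists_pos_forall_isCompact_closedBall [LocallyCompactSpace M]
    (hhom : ∀ x y : M, ∃ f : M ≃ᵢ M, f x = y) : ∃ r > 0, ∀ p : M, IsCompact (closedBall p r) := by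
  rcases isEmpty_or_nonempty M with hM | ⟨⟨o⟩⟩
  · exact ⟨1, one_pos, fun p => isEmptyElim p⟩
  obtain ⟨r, hr, ho⟩ := exists_isCompact_closedBall o
  refine ⟨r, hr, fun p => ?_⟩
  obtain ⟨f, rfl⟩ := hhom o p
  rw [← f.image_closedBall]
  exact ho.image f.continuous

theorem IsCompact.cthickening_of_forall_isCompact_closedBall {K : Set M} (hK : IsCompact K)
    {δ r : ℝ} (hδ : 0 ≤ δ) (hδr : δ < r) (hr : ∀ p : M, IsCompact (closedBall p r)) :
    IsCompact (cthickening δ K) := by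
  obtain ⟨t, -, ht, hKt⟩ := finite_cover_balls_of_compact hK (sub_pos.2 hδr)
  refine (ht.isCompact_biUnion fun q _ => hr q).of_isClosed_subset isClosed_cthickening ?_
  rw [hK.cthickening_eq_biUnion_closedBall hδ]
  simp only [iUnion_subset_iff]
  intro k hk z hz
  obtain ⟨q, hq, hkq⟩ := mem_iUnion₂.1 (hKt hk)
  refine mem_iUnion₂.2 ⟨q, hq, ?_⟩
  rw [mem_closedBall] at hz ⊢
  rw [mem_ball] at hkq
  linarith [dist_triangle z k q]

theorem sigmaCompactSpace_of_forall_isCompact_closedBall [ConnectedSpace M] {r : ℝ} (hr : 0 < r)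
    (hball : ∀ p : M, IsCompact (closedBall p r)) : SigmaCompactSpace M := by
  obtain ⟨o⟩ := ConnectedSpace.toNonempty (α := M)
  set K : ℕ → Set M := fun n => (cthickening (r / 2))^[n] {o}
  have hK_succ (n : ℕ) : K (n + 1) = cthickening (r / 2) (K n) :=
    Function.iterate_succ_apply' _ _ _
  have hK_compact (n : ℕ) : IsCompact (K n) := by
    induction n with
    | zero => exact isCompact_singleton
    | succ n ih =>
      rw [hK_succ]
      exact ih.cthickening_of_forall_isCompact_closedBall (half_pos hr).le (half_lt_self hr) hball
  have hstep : ∀ y z, dist z y < r / 2 → y ∈ ⋃ n, K n → z ∈ ⋃ n, K n := by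
    simp only [mem_iUnion]
    rintro y z hzy ⟨n, hy⟩
    exact ⟨n + 1, hK_succ n ▸ mem_cthickening_of_dist_le z y _ _ hy hzy.le⟩
  have hopen : IsOpen (⋃ n, K n) :=
    Metric.isOpen_iff.2 fun y hy => ⟨r / 2, half_pos hr, fun z hz => hstep y z hz hy⟩
  have hclosed : IsClosed (⋃ n, K n) := isOpen_compl_iff.1 <| Metric.isOpen_iff.2 fun y hy =>
    ⟨r / 2, half_pos hr, fun z hz hzK => hy (hstep z y (by rwa [mem_ball, dist_comm] at hz) hzK)⟩
  exact ⟨⟨K, hK_compact, IsClopen.eq_univ ⟨hclosed, hopen⟩ ⟨o, mem_iUnion.2 ⟨0, rfl⟩⟩⟩⟩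

end Separability

namespace IsometryEquiv

variable {M : Type*} [MetricSpace M]

theorem dist_apply_le_dist_apply_add (f g : M ≃ᵢ M) (p q : M) :
    dist (f p) (g p) ≤ dist (f q) (g q) + 2 * dist p q := by
  calc dist (f p) (g p) ≤ dist (f p) (f q) + dist (f q) (g q) + dist (g q) (g p) :=
        dist_triangle4 _ _ _ _
    _ = dist (f q) (g q) + 2 * dist p q := by rw [f.dist_eq, g.dist_eq, dist_comm q p]; ring

theorem induced_coeFn_eq_induced_comp {ι : Type*} {x : ι → M} (hx : DenseRange x) :
    induced (fun f : M ≃ᵢ M => (⇑f : M → M)) Pi.topologicalSpace =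
      induced (fun f : M ≃ᵢ M => ⇑f ∘ x) Pi.topologicalSpace := by
  refine TopologicalSpace.ext_nhds fun f => ?_
  simp only [nhds_induced, nhds_pi, Filter.pi, comap_iInf, comap_comap]
  refine le_antisymm (le_iInf fun n => iInf_le_of_le (x n) le_rfl) (le_iInf fun p => ?_)
  rw [← tendsto_iff_comap, Metric.tendsto_nhds]
  intro δ hδ
  obtain ⟨n, hn⟩ := hx.exists_dist_lt p (show 0 < δ / 3 by positivity)
  have hnear : ∀ᶠ g in ⨅ n, comap (fun g : M ≃ᵢ M => g (x n)) (𝓝 (f (x n))),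
      dist (g (x n)) (f (x n)) < δ / 3 :=
    iInf_le (fun n => comap (fun g : M ≃ᵢ M => g (x n)) (𝓝 (f (x n)))) n
      (preimage_mem_comap (ball_mem_nhds _ (by positivity)))
  filter_upwards [hnear] with g hg
  simp only [Function.comp_apply, Function.eval]
  linarith [g.dist_apply_le_dist_apply_add f p (x n)]

abbrev pointwiseTopology : TopologicalSpace (M ≃ᵢ M) :=
  induced (fun f : M ≃ᵢ M => (⇑f : M → M)) Pi.topologicalSpace

attribute [local instance] pointwiseTopology

theorem isEmbedding_comp_of_denseRange {ι : Type*} {x : ι → M} (hx : DenseRange x) :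
    IsEmbedding fun f : M ≃ᵢ M => ⇑f ∘ x :=
  ⟨⟨induced_coeFn_eq_induced_comp hx⟩, fun f g hfg =>
    DFunLike.coe_injective (hx.equalizer f.continuous g.continuous hfg)⟩

open scoped PiCountable

-- `dist` on `ℕ → M` is the scoped `PiCountable.dist`, `∑' n, min (2⁻¹ ^ n) (dist (u n) (v n))`.
noncomputable def sampledDist (ε : ℝ) (x : ℕ → M) (o : M) (f g : M ≃ᵢ M) : ℝ :=
  ε / 2 * dist (⇑f ∘ x) (⇑g ∘ x) + dist (f o) (g o)

variable {ε : ℝ} {x : ℕ → M} {o : M}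

theorem isCompatibleDist_sampledDist (hε : 0 < ε) (hx : DenseRange x) :
    IsCompatibleDist (M ≃ᵢ M) (sampledDist ε x o) := by
  let : MetricSpace (ℕ → M) := PiCountable.metricSpace
  unfold sampledDist
  exact ((isCompatibleDist_dist.comap (isEmbedding_comp_of_denseRange hx)).const_mul
    (half_pos hε)).add_dist_comp
      (e := fun f : M ≃ᵢ M => f o) ((continuous_apply o).comp continuous_induced_dom)

theorem sampledDist_mul_left (k f g : M ≃ᵢ M) :
    sampledDist ε x o (k * f) (k * g) = sampledDist ε x o f g := by
  simp only [sampledDist, PiCountable.dist_eq_tsum, Function.comp_apply, mul_apply, k.dist_eq]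

theorem dist_le_sampledDist (hε : 0 ≤ ε) (f g : M ≃ᵢ M) :
    dist (f o) (g o) ≤ sampledDist ε x o f g :=
  le_add_of_nonneg_left (mul_nonneg (div_nonneg hε zero_le_two) dist_nonneg)

theorem sampledDist_le (hε : 0 ≤ ε) (f g : M ≃ᵢ M) :
    sampledDist ε x o f g ≤ dist (f o) (g o) + ε := by
  have := mul_le_mul_of_nonneg_left (PiCountable.dist_le_two (⇑f ∘ x) (⇑g ∘ x))
    (div_nonneg hε zero_le_two)
  rw [sampledDist]
  linarith

end IsometryEquiv

/-- if `G` is a subgroup of the isometry group of a homogeneous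
metric space acting transitively, then (in the topology of pointwise
convergence) `G` carries an admissible left-invariant distance for which the
orbit map `g ↦ g o` is 1-Lipschitz and a `(1, ε)`-quasi-isometry; in
particular the isometry group is metrisable. -/
theorem statement10 (M : Type*) [MetricSpace M] [ConnectedSpace M] [LocallyCompactSpace M]
    (hhom : ∀ x y : M, ∃ f : M ≃ᵢ M, f x = y)
    (G : Subgroup (M ≃ᵢ M)) (htrans : ∀ x y : M, ∃ g ∈ G, g x = y)
    (o : M) (ε : ℝ) (hε : 0 < ε) :
    letI : TopologicalSpace (M ≃ᵢ M) :=
      TopologicalSpace.induced (fun f : M ≃ᵢ M => (⇑f : M → M)) Pi.topologicalSpace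
    (∃ d_G : G → G → ℝ, IsCompatibleDist G d_G ∧ IsLeftInvariant d_G ∧
      (∀ g h : G, dist ((g : M ≃ᵢ M) o) ((h : M ≃ᵢ M) o) ≤ d_G g h) ∧
      IsQuasiIsometry 1 ε d_G (fun x y : M => dist x y)
        (fun g : G => (g : M ≃ᵢ M) o)) ∧
    TopologicalSpace.MetrizableSpace (M ≃ᵢ M) := by
  let := IsometryEquiv.pointwiseTopology (M := M)
  obtain ⟨r, hr, hball⟩ := exists_pos_forall_isCompact_closedBall hhom
  have := sigmaCompactSpace_of_forall_isCompact_closedBall hr hball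
  have : Nonempty M := ⟨o⟩
  obtain ⟨x, hx⟩ := exists_dense_seq M
  have hd := IsometryEquiv.isCompatibleDist_sampledDist (o := o) hε hx
  have hlower := IsometryEquiv.dist_le_sampledDist (x := x) (o := o) hε.le
  have hupper := IsometryEquiv.sampledDist_le (x := x) (o := o) hε.le
  refine ⟨⟨fun g h => IsometryEquiv.sampledDist ε x o g h, hd.comap IsEmbedding.subtypeVal,
    fun k g h => IsometryEquiv.sampledDist_mul_left _ _ _, fun g h => hlower _ _,
    ⟨fun g h => ⟨?_, ?_⟩, fun z => ?_⟩⟩, hd.metrizableSpace⟩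
  · linarith [hupper g h]
  · linarith [hlower g h]
  · obtain ⟨k, hkG, rfl⟩ := htrans o z
    exact ⟨⟨k, hkG⟩, by simpa using hε.le⟩
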